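/- If an agent's delays all occur strictly after the last intersecting index of its path (the last index at which its path shares a vertex with any other agent's path), then removing those delays keeps the plan non-colliding and strictly decreases the total delay. -/
import Mathlib


variable {V : Type*}

/-- The (padded) position of a path at time `t`: after the path ends the agent
stays at its final vertex. -/
def padPos [Inhabited V] (π : List V) (t : ℕ) : V :=
  π.getD (min t (π.length - 1)) default

/-- Two (padded) paths are non-colliding: at every time step they occupy distinct
vertices and they never swap along an edge. -/
def NonColliding [Inhabited V] (π₁ π₂ : List V) : Prop :=
  (∀ t, padPos π₁ t ≠ padPos π₂ t) ∧
  ∀ t, (padPos π₁ t, padPos π₁ (t + 1)) ≠ (padPos π₂ (t + 1), padPos π₂ t)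

/-- The path obtained from `π` by repeating its `j`-th vertex an additional `ks[j]` times. -/
def delayPath (π : List V) (ks : List ℕ) : List V :=
  (List.zipWith (fun v k => List.replicate (k + 1) v) π ks).flatten

/-- `π'` is a `d`-delay of `π`. -/
def IsDelay (d : ℕ) (π π' : List V) : Prop :=
  ∃ ks : List ℕ, ks.length = π.length ∧ ks.sum = d ∧ π' = delayPath π ks

/-- The intersecting indices of agent `i`: indices `j` such that the `j`-th vertex of
agent `i`'s path also occurs on some other agent's path. -/
def interIdx [Inhabited V] {n : ℕ} (P : Fin n → List V) (i : Fin n) : Set ℕ :=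
  {j | j < (P i).length ∧ ∃ l, l ≠ i ∧ (P i).getD j default ∈ P l}

lemma delayPath_cons (v : V) (π : List V) (k : ℕ) (ks : List ℕ) :
    delayPath (v :: π) (k :: ks) = List.replicate (k + 1) v ++ delayPath π ks := by
  simp [delayPath]

lemma mem_of_mem_delayPath {v : V} {π : List V} {ks : List ℕ}
    (h : v ∈ delayPath π ks) : v ∈ π := by
  induction π generalizing ks with
  | nil => simp [delayPath] at h
  | cons w π ih =>
    cases ks with
    | nil => simp [delayPath] at h
    | cons k ks =>
      rw [delayPath_cons, List.mem_append] at h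
      rcases h with h | h
      · simp at h; simp [h]
      · simp [ih h]

lemma mem_delayPath_of_mem {v : V} {π : List V} {ks : List ℕ}
    (hlen : ks.length = π.length) (h : v ∈ π) : v ∈ delayPath π ks := by
  induction π generalizing ks with
  | nil => simp at h
  | cons w π ih =>
    cases ks with
    | nil => simp at hlen
    | cons k ks =>
      rw [delayPath_cons, List.mem_append]
      simp at h hlen
      rcases h with h | h
      · left; simp [h]
      · right; exact ih hlen h

lemma delayPath_getD_prefix [Inhabited V] (π : List V) (ks : List ℕ) (t J : ℕ)
    (hlen : ks.length = π.length)
    (hz : ∀ j < J, ks.getD j 0 = 0)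
    (ht : t ≤ J) (hJ : J < π.length) :
    (delayPath π ks).getD t default = π.getD t default := by
  induction t generalizing π ks J with
  | zero =>
    cases π with
    | nil => simp at hJ
    | cons w π =>
      cases ks with
      | nil => simp at hlen
      | cons k ks => rw [delayPath_cons]; simp [List.replicate_succ]
  | succ t ih =>
    cases π with
    | nil => simp at hJ
    | cons w π =>
      cases ks with
      | nil => simp at hlen
      | cons k ks =>
        have hk0 : k = 0 := hz 0 (Nat.lt_of_lt_of_le (Nat.succ_pos t) ht)
        subst hk0
        rw [delayPath_cons]
        simp only [List.replicate_succ, List.replicate_zero]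
        obtain ⟨J', rfl⟩ : ∃ J', J = J' + 1 :=
          ⟨J - 1, (Nat.succ_pred_eq_of_pos (Nat.lt_of_lt_of_le (Nat.succ_pos t) ht)).symm⟩
        simpa using ih π ks J' (by simpa using hlen) (fun j hj => hz (j+1) (by omega)) (by omega) (by simpa using hJ)

lemma delayPath_length (π : List V) (ks : List ℕ) (hlen : ks.length = π.length) :
    (delayPath π ks).length = π.length + ks.sum := by
  induction π generalizing ks with
  | nil =>
    obtain rfl := List.length_eq_zero_iff.mp hlen
    simp [delayPath]
  | cons w π ih =>
    cases ks with
    | nil => simp at hlen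
    | cons k ks =>
      rw [delayPath_cons]
      simp at hlen ⊢
      rw [ih ks hlen]
      omega

lemma NonColliding.symm [Inhabited V] {π₁ π₂ : List V} (h : NonColliding π₁ π₂) :
    NonColliding π₂ π₁ := by
  refine ⟨fun t => (h.1 t).symm, fun t hEq => ?_⟩
  apply h.2 t
  rw [Prod.ext_iff] at hEq ⊢
  exact ⟨hEq.2.symm, hEq.1.symm⟩

lemma padPos_mem [Inhabited V] {π : List V} (hne : π ≠ []) (t : ℕ) : padPos π t ∈ π := by
  have hlen : 0 < π.length := List.length_pos_iff.mpr hne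
  have : min t (π.length - 1) < π.length := by omega
  rw [padPos, List.getD_eq_getElem _ _ this]
  exact List.getElem_mem _

lemma exists_padPos_eq [Inhabited V] {π : List V} {v : V} (h : v ∈ π) :
    ∃ t, padPos π t = v := by
  obtain ⟨m, hm, rfl⟩ := List.getElem_of_mem h
  refine ⟨m, ?_⟩
  have : min m (π.length - 1) = m := by omega
  rw [padPos, this, List.getD_eq_getElem _ _ hm]

lemma padPos_nil [Inhabited V] (t : ℕ) : padPos ([] : List V) t = default := by
  simp [padPos]
/-- If all of agent `i`'s introduced delays occur strictly after every intersecting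
index of its path, then removing them (restoring the original path of agent `i`)
keeps the plan non-colliding and strictly decreases the total delay. -/
theorem remove_trailing_delays [Inhabited V] {n : ℕ}
    (P P' : Fin n → List V) (d : Fin n → ℕ) (i : Fin n) (ks : List ℕ)
    (hdel : ∀ a, IsDelay (d a) (P a) (P' a))
    (hk : ks.length = (P i).length) (hsum : ks.sum = d i)
    (hP' : P' i = delayPath (P i) ks)
    (htrail : ∀ j, j < ks.length → ks.getD j 0 ≠ 0 → ∀ m ∈ interIdx P i, m < j)
    (hpos : 0 < d i)
    (hnc : ∀ a b, a ≠ b → NonColliding (P' a) (P' b)) :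
    (∀ a b, a ≠ b →
      NonColliding (Function.update P' i (P i) a) (Function.update P' i (P i) b)) ∧
    (∑ a, Function.update d i 0 a) < ∑ a, d a := by
  -- the first index with a nonzero delay
  have hex : ∃ j, ks.getD j 0 ≠ 0 := by
    by_contra hall
    push_neg at hall
    have : ks.sum = 0 := by
      apply List.sum_eq_zero
      intro x hx
      obtain ⟨j, hj, rfl⟩ := List.getElem_of_mem hx
      have := hall j
      rwa [List.getD_eq_getElem _ _ hj] at this
    omega
  set J := Nat.find hex with hJdef
  have hJne : ks.getD J 0 ≠ 0 := Nat.find_spec hex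
  have hzero : ∀ j < J, ks.getD j 0 = 0 := by
    intro j hj
    by_contra hne
    exact absurd hj (not_lt.mpr (Nat.find_le hne))
  have hJlt : J < ks.length := by
    by_contra h
    exact hJne (List.getD_eq_default _ _ (le_of_not_gt h))
  have hJlen : J < (P i).length := hk ▸ hJlt
  have hInter : ∀ m ∈ interIdx P i, m < J := htrail J hJlt hJne
  have hP'len : (P' i).length = (P i).length + d i := by
    rw [hP', delayPath_length _ _ hk, hsum]
  -- for times up to J, the original and delayed paths of agent i agree
  have claim1 : ∀ t ≤ J, padPos (P i) t = padPos (P' i) t := by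
    intro t ht
    have h1 : min t ((P i).length - 1) = t := by omega
    have h2 : min t ((P' i).length - 1) = t := by omega
    rw [padPos, padPos, h1, h2, hP',
      delayPath_getD_prefix (P i) ks t J hk hzero ht hJlen]
  -- after time J, agent i's (original) vertices avoid every other agent's path
  have claim2 : ∀ t, J < t → ∀ b, b ≠ i → ∀ s, padPos (P i) t ≠ padPos (P' b) s := by
    intro t ht b hb s
    set m := min t ((P i).length - 1) with hm
    have hmJ : J ≤ m := by omega
    have hmlen : m < (P i).length := by omega
    have hnotin : ∀ l, l ≠ i → (P i).getD m default ∉ P l := by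
      intro l hl hmem
      have : m ∈ interIdx P i := ⟨hmlen, l, hl, hmem⟩
      exact absurd (hInter m this) (not_lt.mpr hmJ)
    have hvp : padPos (P i) t = (P i).getD m default := rfl
    rw [hvp]
    by_cases hbne : P' b = []
    · -- then agent b's vertex is `default`, but agent i's vertex occurs on π'_i,
      -- and π'_i never collides with the constant-`default` path of b
      have hv : (P i).getD m default ∈ P i := by
        rw [List.getD_eq_getElem _ _ hmlen]
        exact List.getElem_mem _
      have hv' : (P i).getD m default ∈ P' i := by
        rw [hP']; exact mem_delayPath_of_mem hk hv
      obtain ⟨s', hs'⟩ := exists_padPos_eq hv'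
      have := (hnc i b hb.symm).1 s'
      rw [hs', hbne, padPos_nil] at this
      rw [hbne, padPos_nil]
      exact this
    · intro hEq
      obtain ⟨ksb, hksb, -, hPb'⟩ := hdel b
      have : padPos (P' b) s ∈ P b :=
        mem_of_mem_delayPath (by rw [← hPb']; exact padPos_mem hbne s)
      rw [← hEq] at this
      exact hnotin b hb this
  have ncMain : ∀ b, b ≠ i → NonColliding (P i) (P' b) := by
    intro b hb
    constructor
    · intro t
      rcases le_or_gt t J with ht | ht
      · rw [claim1 t ht]
        exact (hnc i b hb.symm).1 t
      · exact claim2 t ht b hb t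
    · intro t hEq
      rcases Nat.lt_or_ge t J with ht | ht
      · rw [claim1 t ht.le, claim1 (t + 1) ht] at hEq
        exact (hnc i b hb.symm).2 t hEq
      · have h2 := congrArg Prod.snd hEq
        exact claim2 (t + 1) (by omega) b hb t h2
  constructor
  · intro a b hab
    rcases eq_or_ne a i with rfl | ha
    · have hbne : b ≠ a := hab.symm
      rw [Function.update_self, Function.update_of_ne hbne]
      exact ncMain b hbne
    · rw [Function.update_of_ne ha]
      rcases eq_or_ne b i with rfl | hbne
      · rw [Function.update_self]
        exact (ncMain a ha).symm
      · rw [Function.update_of_ne hbne]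
        exact hnc a b hab
  · rw [Finset.sum_update_of_mem (Finset.mem_univ i), zero_add]
    have h2 : ∑ a, d a = d i + ∑ x ∈ Finset.univ \ {i}, d x := by
      rw [Finset.sdiff_singleton_eq_erase, Finset.add_sum_erase _ _ (Finset.mem_univ i)]
    omega
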